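/- arXiv:1804.10972 — 2 statements merged into one kernel-verified Lean document; each statement's English description precedes it below -/
import Mathlib

section
/- If smooth vector fields E, B, Φ, Ψ and given smooth sources ρ, J on ℝ³ satisfy the evolution equations ∂E/∂t = cΦ − 4πJ, ∂Φ/∂t = cΔE − 4πc∇ρ, ∂B/∂t = −cΨ, ∂Ψ/∂t = −cΔB − 4π∇×J, and J, ρ satisfy the continuity equation ∂ρ/∂t + ∇·J = 0, then the error quantities K_B = Φ − ∇×B, K_E = Ψ − ∇×E, D_B = ∇·B, D_E = ∇·E − 4πρ satisfy the linear system ∂K_B/∂t = c∇×K_E + c∇D_E, ∂K_E/∂t = −c∇×K_B − c∇D_B, ∂D_B/∂t = −c∇·K_E, ∂D_E/∂t = c∇·K_B. -/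
noncomputable section
open Real MeasureTheory

abbrev V3 : Type := Fin 3 → ℝ

/-- partial derivative in time -/
def pt (f : ℝ × V3 → ℝ) (p : ℝ × V3) : ℝ := deriv (fun s => f (s, p.2)) p.1

/-- partial derivative in the i-th spatial direction -/
def px (i : Fin 3) (f : ℝ × V3 → ℝ) (p : ℝ × V3) : ℝ :=
  deriv (fun s => f (p.1, Function.update p.2 i s)) (p.2 i)

/-- componentwise time derivative of a vector field -/
def vt (F : ℝ × V3 → V3) (p : ℝ × V3) : V3 := fun j => pt (fun q => F q j) p

/-- spatial divergence -/
def vdiv (F : ℝ × V3 → V3) (p : ℝ × V3) : ℝ := ∑ i, px i (fun q => F q i) p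

/-- spatial gradient -/
def vgrad (f : ℝ × V3 → ℝ) (p : ℝ × V3) : V3 := fun i => px i f p

/-- spatial curl -/
def vcurl (F : ℝ × V3 → V3) (p : ℝ × V3) : V3 :=
  ![px 1 (fun q => F q 2) p - px 2 (fun q => F q 1) p,
    px 2 (fun q => F q 0) p - px 0 (fun q => F q 2) p,
    px 0 (fun q => F q 1) p - px 1 (fun q => F q 0) p]

/-- componentwise (vector) spatial Laplacian -/
def vlap (F : ℝ × V3 → V3) (p : ℝ × V3) : V3 := fun j => ∑ i, px i (px i (fun q => F q j)) p

/-- scalar spatial Laplacian -/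
def slap (f : ℝ × V3 → ℝ) (p : ℝ × V3) : ℝ := ∑ i, px i (px i f) p

/-! ## Auxiliary lemmas -/

def et : ℝ × V3 := (1, (0 : V3))
def ex (i : Fin 3) : ℝ × V3 := ((0:ℝ), Pi.single i 1)

section Tools
variable {f g h f1 f2 f3 : ℝ × V3 → ℝ} {p : ℝ × V3} {i j : Fin 3} {a b : ℝ}

lemma hasDerivAt_sliceT (hf : DifferentiableAt ℝ f p) :
    HasDerivAt (fun s => f (s, p.2)) (fderiv ℝ f p et) p.1 := by
  have hg : HasDerivAt (fun s : ℝ => ((s, p.2) : ℝ × V3)) et p.1 :=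
    (hasDerivAt_id p.1).prodMk (hasDerivAt_const p.1 p.2)
  have h2 : HasFDerivAt f (fderiv ℝ f p) (p.1, p.2) := by
    rw [Prod.mk.eta]; exact hf.hasFDerivAt
  exact h2.comp_hasDerivAt p.1 hg

lemma hasDerivAt_sliceX (hf : DifferentiableAt ℝ f p) (i : Fin 3) :
    HasDerivAt (fun s => f (p.1, Function.update p.2 i s)) (fderiv ℝ f p (ex i)) (p.2 i) := by
  have hg : ∀ s, HasDerivAt (fun s : ℝ => ((p.1, Function.update p.2 i s) : ℝ × V3)) (ex i) s := by
    intro s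
    refine (hasDerivAt_const s p.1).prodMk ?_
    rw [hasDerivAt_pi]
    intro j
    by_cases hji : j = i
    · subst hji
      simpa [Function.update_self, Pi.single_eq_same] using hasDerivAt_id' s
    · simpa [Function.update_of_ne hji, Pi.single_eq_of_ne hji] using hasDerivAt_const s (p.2 j)
  have h2 : HasFDerivAt f (fderiv ℝ f p) (p.1, Function.update p.2 i (p.2 i)) := by
    rw [Function.update_eq_self, Prod.mk.eta]; exact hf.hasFDerivAt
  exact h2.comp_hasDerivAt (p.2 i) (hg (p.2 i))

lemma pt_eq (hf : DifferentiableAt ℝ f p) : pt f p = fderiv ℝ f p et :=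
  (hasDerivAt_sliceT hf).deriv

lemma px_eq (hf : DifferentiableAt ℝ f p) : px i f p = fderiv ℝ f p (ex i) :=
  (hasDerivAt_sliceX hf i).deriv

lemma pt_hd (hf : DifferentiableAt ℝ f p) : HasDerivAt (fun s => f (s, p.2)) (pt f p) p.1 := by
  rw [pt_eq hf]; exact hasDerivAt_sliceT hf

lemma px_hd (hf : DifferentiableAt ℝ f p) :
    HasDerivAt (fun s => f (p.1, Function.update p.2 i s)) (px i f p) (p.2 i) := by
  rw [px_eq hf]; exact hasDerivAt_sliceX hf i

lemma diff_fderiv_apply (hf : ContDiff ℝ 2 f) (v : ℝ × V3) :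
    Differentiable ℝ (fun q => fderiv ℝ f q v) := by
  have h1 : Differentiable ℝ (fderiv ℝ f) :=
    (hf.fderiv_right (m := 1) (by norm_num)).differentiable one_ne_zero
  exact (ContinuousLinearMap.apply ℝ ℝ v).differentiable.comp h1

lemma pt_fun (hf : Differentiable ℝ f) : pt f = fun q => fderiv ℝ f q et :=
  funext fun q => pt_eq (hf q)

lemma px_fun (hf : Differentiable ℝ f) : px i f = fun q => fderiv ℝ f q (ex i) :=
  funext fun q => px_eq (hf q)

lemma diff_px (hf : ContDiff ℝ 2 f) : Differentiable ℝ (px i f) := by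
  rw [px_fun (hf.differentiable two_ne_zero)]; exact diff_fderiv_apply hf _

lemma D_comm (hf : ContDiff ℝ 2 f) (v w : ℝ × V3) :
    fderiv ℝ (fun q => fderiv ℝ f q w) p v = fderiv ℝ (fun q => fderiv ℝ f q v) p w := by
  have hdd : Differentiable ℝ (fderiv ℝ f) :=
    (hf.fderiv_right (m := 1) (by norm_num)).differentiable one_ne_zero
  have h2 : ∀ y, HasFDerivAt f (fderiv ℝ f y) y := fun y =>
    ((hf.differentiable two_ne_zero) y).hasFDerivAt
  have h3 : HasFDerivAt (fderiv ℝ f) (fderiv ℝ (fderiv ℝ f) p) p := (hdd p).hasFDerivAt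
  have hsym := second_derivative_symmetric h2 h3 v w
  have e1 : ∀ u : ℝ × V3, fderiv ℝ (fun q => fderiv ℝ f q u) p
      = (ContinuousLinearMap.apply ℝ ℝ u).comp (fderiv ℝ (fderiv ℝ f) p) := fun u =>
    (((ContinuousLinearMap.apply ℝ ℝ u).hasFDerivAt).comp p h3).fderiv
  rw [e1 w, e1 v]
  simpa using hsym

lemma pt_px_comm (hf : ContDiff ℝ 2 f) : pt (px i f) p = px i (pt f) p := by
  rw [px_fun (hf.differentiable two_ne_zero), pt_fun (hf.differentiable two_ne_zero)]
  rw [pt_eq (diff_fderiv_apply hf _ p), px_eq (diff_fderiv_apply hf _ p)]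
  exact D_comm hf _ _

lemma px_px_comm (hf : ContDiff ℝ 2 f) : px i (px j f) p = px j (px i f) p := by
  rw [px_fun (f := f) (i := j) (hf.differentiable two_ne_zero),
      px_fun (f := f) (i := i) (hf.differentiable two_ne_zero)]
  rw [px_eq (diff_fderiv_apply hf _ p), px_eq (diff_fderiv_apply hf _ p)]
  exact D_comm hf _ _

lemma pt_sub_sub (h1 : DifferentiableAt ℝ f p) (h2 : DifferentiableAt ℝ g p)
    (h3 : DifferentiableAt ℝ h p) :
    pt (fun q => f q - (g q - h q)) p = pt f p - (pt g p - pt h p) :=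
  ((pt_hd h1).sub ((pt_hd h2).sub (pt_hd h3))).deriv

lemma px_sub_sub (h1 : DifferentiableAt ℝ f p) (h2 : DifferentiableAt ℝ g p)
    (h3 : DifferentiableAt ℝ h p) :
    px i (fun q => f q - (g q - h q)) p = px i f p - (px i g p - px i h p) :=
  ((px_hd h1).sub ((px_hd h2).sub (px_hd h3))).deriv

lemma pt_add3 (h1 : DifferentiableAt ℝ f1 p) (h2 : DifferentiableAt ℝ f2 p)
    (h3 : DifferentiableAt ℝ f3 p) :
    pt (fun q => f1 q + f2 q + f3 q) p = pt f1 p + pt f2 p + pt f3 p :=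
  (((pt_hd h1).add (pt_hd h2)).add (pt_hd h3)).deriv

lemma px_add3 (h1 : DifferentiableAt ℝ f1 p) (h2 : DifferentiableAt ℝ f2 p)
    (h3 : DifferentiableAt ℝ f3 p) :
    px i (fun q => f1 q + f2 q + f3 q) p = px i f1 p + px i f2 p + px i f3 p :=
  (((px_hd h1).add (px_hd h2)).add (px_hd h3)).deriv

lemma pt_add3_sub_cmul (h1 : DifferentiableAt ℝ f1 p) (h2 : DifferentiableAt ℝ f2 p)
    (h3 : DifferentiableAt ℝ f3 p) (h4 : DifferentiableAt ℝ g p) :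
    pt (fun q => f1 q + f2 q + f3 q - a * g q) p
      = pt f1 p + pt f2 p + pt f3 p - a * pt g p :=
  ((((pt_hd h1).add (pt_hd h2)).add (pt_hd h3)).sub ((pt_hd h4).const_mul a)).deriv

lemma px_add3_sub_cmul (h1 : DifferentiableAt ℝ f1 p) (h2 : DifferentiableAt ℝ f2 p)
    (h3 : DifferentiableAt ℝ f3 p) (h4 : DifferentiableAt ℝ g p) :
    px i (fun q => f1 q + f2 q + f3 q - a * g q) p
      = px i f1 p + px i f2 p + px i f3 p - a * px i g p :=
  ((((px_hd h1).add (px_hd h2)).add (px_hd h3)).sub ((px_hd h4).const_mul a)).deriv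

lemma px_cmul_sub_cmul (h1 : DifferentiableAt ℝ f p) (h2 : DifferentiableAt ℝ g p) :
    px i (fun q => a * f q - b * g q) p = a * px i f p - b * px i g p :=
  (((px_hd h1).const_mul a).sub ((px_hd h2).const_mul b)).deriv

lemma px_neg_cmul (h1 : DifferentiableAt ℝ f p) :
    px i (fun q => -(a * f q)) p = -(a * px i f p) :=
  ((px_hd h1).const_mul a).neg.deriv

end Tools

/-- the error quantities of the auxiliary system satisfy the stated
linear evolution system. -/
theorem stmt_0 (c : ℝ) (hc : 0 < c)
    (E B Φ Ψ J : ℝ × V3 → V3) (ρ : ℝ × V3 → ℝ)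
    (hE : ContDiff ℝ 2 E) (hB : ContDiff ℝ 2 B) (hΦ : ContDiff ℝ 2 Φ)
    (hΨ : ContDiff ℝ 2 Ψ) (hJ : ContDiff ℝ 2 J) (hρ : ContDiff ℝ 2 ρ)
    (heqE : ∀ p, vt E p = c • Φ p - (4 * π) • J p)
    (heqΦ : ∀ p, vt Φ p = c • vlap E p - (4 * π * c) • vgrad ρ p)
    (heqB : ∀ p, vt B p = -(c • Ψ p))
    (heqΨ : ∀ p, vt Ψ p = -(c • vlap B p) - (4 * π) • vcurl J p)
    (hcont : ∀ p, pt ρ p + vdiv J p = 0) :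
    (∀ p, vt (fun q => Φ q - vcurl B q) p
        = c • vcurl (fun q => Ψ q - vcurl E q) p
          + c • vgrad (fun q => vdiv E q - 4 * π * ρ q) p) ∧
    (∀ p, vt (fun q => Ψ q - vcurl E q) p
        = -(c • vcurl (fun q => Φ q - vcurl B q) p)
          - c • vgrad (fun q => vdiv B q) p) ∧
    (∀ p, pt (fun q => vdiv B q) p = -(c * vdiv (fun q => Ψ q - vcurl E q) p)) ∧
    (∀ p, pt (fun q => vdiv E q - 4 * π * ρ q) p
        = c * vdiv (fun q => Φ q - vcurl B q) p) := by
  have hE2 : ∀ j : Fin 3, ContDiff ℝ 2 (fun q => E q j) := contDiff_pi.mp hE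
  have hB2 : ∀ j : Fin 3, ContDiff ℝ 2 (fun q => B q j) := contDiff_pi.mp hB
  have dΦ : ∀ (j : Fin 3) (q), DifferentiableAt ℝ (fun r => Φ r j) q := fun j q =>
    ((contDiff_pi.mp hΦ j).differentiable two_ne_zero) q
  have dΨ : ∀ (j : Fin 3) (q), DifferentiableAt ℝ (fun r => Ψ r j) q := fun j q =>
    ((contDiff_pi.mp hΨ j).differentiable two_ne_zero) q
  have dJ : ∀ (j : Fin 3) (q), DifferentiableAt ℝ (fun r => J r j) q := fun j q =>
    ((contDiff_pi.mp hJ j).differentiable two_ne_zero) q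
  have dρ : ∀ q, DifferentiableAt ℝ ρ q := fun q => (hρ.differentiable two_ne_zero) q
  have dpxE : ∀ (i j : Fin 3) (q), DifferentiableAt ℝ (px i (fun r => E r j)) q :=
    fun i j q => diff_px (hE2 j) q
  have dpxB : ∀ (i j : Fin 3) (q), DifferentiableAt ℝ (px i (fun r => B r j)) q :=
    fun i j q => diff_px (hB2 j) q
  have hptE : ∀ j : Fin 3, pt (fun q => E q j) = fun q => c * Φ q j - 4 * π * J q j := by
    intro j; funext q
    have h := congrFun (heqE q) j
    simpa [vt, Pi.sub_apply, Pi.smul_apply, smul_eq_mul] using h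
  have hptB : ∀ j : Fin 3, pt (fun q => B q j) = fun q => -(c * Ψ q j) := by
    intro j; funext q
    have h := congrFun (heqB q) j
    simpa [vt, Pi.neg_apply, Pi.smul_apply, smul_eq_mul] using h
  have hΦc : ∀ (j : Fin 3) (p), pt (fun q => Φ q j) p
      = c * (px 0 (px 0 (fun q => E q j)) p + px 1 (px 1 (fun q => E q j)) p
          + px 2 (px 2 (fun q => E q j)) p) - 4 * π * c * px j ρ p := by
    intro j p
    have h := congrFun (heqΦ p) j
    simpa [vt, vlap, vgrad, Fin.sum_univ_three, Pi.sub_apply, Pi.smul_apply, smul_eq_mul,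
      mul_add] using h
  have hΨc : ∀ (j : Fin 3) (p), pt (fun q => Ψ q j) p
      = -(c * (px 0 (px 0 (fun q => B q j)) p + px 1 (px 1 (fun q => B q j)) p
          + px 2 (px 2 (fun q => B q j)) p)) - 4 * π * vcurl J p j := by
    intro j p
    have h := congrFun (heqΨ p) j
    simpa [vt, vlap, Fin.sum_univ_three, Pi.sub_apply, Pi.neg_apply, Pi.smul_apply,
      smul_eq_mul, mul_add] using h
  have hρc : ∀ p, pt ρ p = -(px 0 (fun r => J r 0) p + px 1 (fun r => J r 1) p
      + px 2 (fun r => J r 2) p) := by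
    intro p
    have h := hcont p
    simp only [vdiv, Fin.sum_univ_three] at h
    linarith
  refine ⟨?_, ?_, ?_, ?_⟩
  · -- K_B equation
    intro p
    funext j
    fin_cases j
    · simp only [Fin.zero_eta, Fin.mk_one, Fin.reduceFinMk, vt, vcurl, vgrad, vdiv, vlap, Fin.sum_univ_three, Pi.sub_apply, Pi.add_apply,
        Pi.smul_apply, smul_eq_mul, Matrix.cons_val_zero, Matrix.cons_val_one, Matrix.head_cons,
        Matrix.cons_val_two, Matrix.tail_cons]
      rw [pt_sub_sub (dΦ 0 p) (dpxB 1 2 p) (dpxB 2 1 p),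
          pt_px_comm (hB2 2), pt_px_comm (hB2 1), hptB 2, hptB 1,
          px_neg_cmul (dΨ 2 p), px_neg_cmul (dΨ 1 p),
          hΦc 0 p,
          px_sub_sub (dΨ 2 p) (dpxE 0 1 p) (dpxE 1 0 p),
          px_sub_sub (dΨ 1 p) (dpxE 2 0 p) (dpxE 0 2 p),
          px_add3_sub_cmul (dpxE 0 0 p) (dpxE 1 1 p) (dpxE 2 2 p) (dρ p),
          px_px_comm (hE2 1) (i := 1) (j := 0) (p := p),
          px_px_comm (hE2 2) (i := 2) (j := 0) (p := p)]
      ring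
    · simp only [Fin.zero_eta, Fin.mk_one, Fin.reduceFinMk, vt, vcurl, vgrad, vdiv, vlap, Fin.sum_univ_three, Pi.sub_apply, Pi.add_apply,
        Pi.smul_apply, smul_eq_mul, Matrix.cons_val_zero, Matrix.cons_val_one, Matrix.head_cons,
        Matrix.cons_val_two, Matrix.tail_cons]
      rw [pt_sub_sub (dΦ 1 p) (dpxB 2 0 p) (dpxB 0 2 p),
          pt_px_comm (hB2 0), pt_px_comm (hB2 2), hptB 0, hptB 2,
          px_neg_cmul (dΨ 0 p), px_neg_cmul (dΨ 2 p),
          hΦc 1 p,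
          px_sub_sub (dΨ 0 p) (dpxE 1 2 p) (dpxE 2 1 p),
          px_sub_sub (dΨ 2 p) (dpxE 0 1 p) (dpxE 1 0 p),
          px_add3_sub_cmul (dpxE 0 0 p) (dpxE 1 1 p) (dpxE 2 2 p) (dρ p),
          px_px_comm (hE2 2) (i := 2) (j := 1) (p := p),
          px_px_comm (hE2 0) (i := 1) (j := 0) (p := p)]
      ring
    · simp only [Fin.zero_eta, Fin.mk_one, Fin.reduceFinMk, vt, vcurl, vgrad, vdiv, vlap, Fin.sum_univ_three, Pi.sub_apply, Pi.add_apply,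
        Pi.smul_apply, smul_eq_mul, Matrix.cons_val_zero, Matrix.cons_val_one, Matrix.head_cons,
        Matrix.cons_val_two, Matrix.tail_cons]
      rw [pt_sub_sub (dΦ 2 p) (dpxB 0 1 p) (dpxB 1 0 p),
          pt_px_comm (hB2 1), pt_px_comm (hB2 0), hptB 1, hptB 0,
          px_neg_cmul (dΨ 1 p), px_neg_cmul (dΨ 0 p),
          hΦc 2 p,
          px_sub_sub (dΨ 1 p) (dpxE 2 0 p) (dpxE 0 2 p),
          px_sub_sub (dΨ 0 p) (dpxE 1 2 p) (dpxE 2 1 p),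
          px_add3_sub_cmul (dpxE 0 0 p) (dpxE 1 1 p) (dpxE 2 2 p) (dρ p),
          px_px_comm (hE2 0) (i := 2) (j := 0) (p := p),
          px_px_comm (hE2 1) (i := 2) (j := 1) (p := p)]
      ring
  · -- K_E equation
    intro p
    funext j
    fin_cases j
    · simp only [Fin.zero_eta, Fin.mk_one, Fin.reduceFinMk, vt, vcurl, vgrad, vdiv, vlap, Fin.sum_univ_three, Pi.sub_apply, Pi.add_apply,
        Pi.neg_apply, Pi.smul_apply, smul_eq_mul, Matrix.cons_val_zero, Matrix.cons_val_one,
        Matrix.head_cons, Matrix.cons_val_two, Matrix.tail_cons]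
      rw [pt_sub_sub (dΨ 0 p) (dpxE 1 2 p) (dpxE 2 1 p),
          pt_px_comm (hE2 2), pt_px_comm (hE2 1), hptE 2, hptE 1,
          px_cmul_sub_cmul (dΦ 2 p) (dJ 2 p), px_cmul_sub_cmul (dΦ 1 p) (dJ 1 p),
          hΨc 0 p,
          px_sub_sub (dΦ 2 p) (dpxB 0 1 p) (dpxB 1 0 p),
          px_sub_sub (dΦ 1 p) (dpxB 2 0 p) (dpxB 0 2 p),
          px_add3 (dpxB 0 0 p) (dpxB 1 1 p) (dpxB 2 2 p),
          px_px_comm (hB2 1) (i := 1) (j := 0) (p := p),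
          px_px_comm (hB2 2) (i := 2) (j := 0) (p := p)]
      simp only [vcurl, Matrix.cons_val_zero]
      ring
    · simp only [Fin.zero_eta, Fin.mk_one, Fin.reduceFinMk, vt, vcurl, vgrad, vdiv, vlap, Fin.sum_univ_three, Pi.sub_apply, Pi.add_apply,
        Pi.neg_apply, Pi.smul_apply, smul_eq_mul, Matrix.cons_val_zero, Matrix.cons_val_one,
        Matrix.head_cons, Matrix.cons_val_two, Matrix.tail_cons]
      rw [pt_sub_sub (dΨ 1 p) (dpxE 2 0 p) (dpxE 0 2 p),
          pt_px_comm (hE2 0), pt_px_comm (hE2 2), hptE 0, hptE 2,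
          px_cmul_sub_cmul (dΦ 0 p) (dJ 0 p), px_cmul_sub_cmul (dΦ 2 p) (dJ 2 p),
          hΨc 1 p,
          px_sub_sub (dΦ 0 p) (dpxB 1 2 p) (dpxB 2 1 p),
          px_sub_sub (dΦ 2 p) (dpxB 0 1 p) (dpxB 1 0 p),
          px_add3 (dpxB 0 0 p) (dpxB 1 1 p) (dpxB 2 2 p),
          px_px_comm (hB2 2) (i := 2) (j := 1) (p := p),
          px_px_comm (hB2 0) (i := 1) (j := 0) (p := p)]
      simp only [vcurl, Matrix.cons_val_one, Matrix.head_cons, Matrix.cons_val_zero]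
      ring
    · simp only [Fin.zero_eta, Fin.mk_one, Fin.reduceFinMk, vt, vcurl, vgrad, vdiv, vlap, Fin.sum_univ_three, Pi.sub_apply, Pi.add_apply,
        Pi.neg_apply, Pi.smul_apply, smul_eq_mul, Matrix.cons_val_zero, Matrix.cons_val_one,
        Matrix.head_cons, Matrix.cons_val_two, Matrix.tail_cons]
      rw [pt_sub_sub (dΨ 2 p) (dpxE 0 1 p) (dpxE 1 0 p),
          pt_px_comm (hE2 1), pt_px_comm (hE2 0), hptE 1, hptE 0,
          px_cmul_sub_cmul (dΦ 1 p) (dJ 1 p), px_cmul_sub_cmul (dΦ 0 p) (dJ 0 p),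
          hΨc 2 p,
          px_sub_sub (dΦ 1 p) (dpxB 2 0 p) (dpxB 0 2 p),
          px_sub_sub (dΦ 0 p) (dpxB 1 2 p) (dpxB 2 1 p),
          px_add3 (dpxB 0 0 p) (dpxB 1 1 p) (dpxB 2 2 p),
          px_px_comm (hB2 0) (i := 2) (j := 0) (p := p),
          px_px_comm (hB2 1) (i := 2) (j := 1) (p := p)]
      simp only [vcurl, Matrix.cons_val_two, Matrix.tail_cons, Matrix.head_cons]
      ring
  · -- div B equation
    intro p
    simp only [vdiv, vcurl, Fin.sum_univ_three, Pi.sub_apply, Matrix.cons_val_zero,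
      Matrix.cons_val_one, Matrix.head_cons, Matrix.cons_val_two, Matrix.tail_cons]
    rw [pt_add3 (dpxB 0 0 p) (dpxB 1 1 p) (dpxB 2 2 p),
        pt_px_comm (hB2 0), pt_px_comm (hB2 1), pt_px_comm (hB2 2),
        hptB 0, hptB 1, hptB 2,
        px_neg_cmul (dΨ 0 p), px_neg_cmul (dΨ 1 p), px_neg_cmul (dΨ 2 p),
        px_sub_sub (dΨ 0 p) (dpxE 1 2 p) (dpxE 2 1 p),
        px_sub_sub (dΨ 1 p) (dpxE 2 0 p) (dpxE 0 2 p),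
        px_sub_sub (dΨ 2 p) (dpxE 0 1 p) (dpxE 1 0 p),
        px_px_comm (hE2 2) (i := 1) (j := 0) (p := p),
        px_px_comm (hE2 1) (i := 2) (j := 0) (p := p),
        px_px_comm (hE2 0) (i := 2) (j := 1) (p := p)]
    ring
  · -- div E equation
    intro p
    simp only [vdiv, vcurl, Fin.sum_univ_three, Pi.sub_apply, Matrix.cons_val_zero,
      Matrix.cons_val_one, Matrix.head_cons, Matrix.cons_val_two, Matrix.tail_cons]
    rw [pt_add3_sub_cmul (dpxE 0 0 p) (dpxE 1 1 p) (dpxE 2 2 p) (dρ p),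
        pt_px_comm (hE2 0), pt_px_comm (hE2 1), pt_px_comm (hE2 2),
        hptE 0, hptE 1, hptE 2,
        px_cmul_sub_cmul (dΦ 0 p) (dJ 0 p),
        px_cmul_sub_cmul (dΦ 1 p) (dJ 1 p),
        px_cmul_sub_cmul (dΦ 2 p) (dJ 2 p),
        hρc p,
        px_sub_sub (dΦ 0 p) (dpxB 1 2 p) (dpxB 2 1 p),
        px_sub_sub (dΦ 1 p) (dpxB 2 0 p) (dpxB 0 2 p),
        px_sub_sub (dΦ 2 p) (dpxB 0 1 p) (dpxB 1 0 p),
        px_px_comm (hB2 2) (i := 1) (j := 0) (p := p),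
        px_px_comm (hB2 1) (i := 2) (j := 0) (p := p),
        px_px_comm (hB2 0) (i := 2) (j := 1) (p := p)]
    ring
end
end

section
/- The kernel W_{6,0} satisfies the discrete moment conditions: Σ_{j∈ℤ} W_{6,0}(x − j) = 1 and Σ_{j∈ℤ} (x − j)^m W_{6,0}(x − j) = 0 for m = 1, 2 and all x ∈ ℝ. (Equivalently, its zeroth continuous moment is 1: ∫_ℝ W_{6,0}(x) dx = 1, and ∫_ℝ x W_{6,0}(x) dx = 0 by symmetry.) -/
noncomputable section
open MeasureTheory

/-- piece of W₆,₀ on [0,1] -/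
def w1 (x : ℝ) : ℝ :=
  -x ^ 5 / 12 + x ^ 4 / 4 + 5 * x ^ 3 / 12 - 5 * x ^ 2 / 4 - x / 3 + 1

/-- piece of W₆,₀ on [1,2] -/
def w2 (x : ℝ) : ℝ :=
  x ^ 5 / 24 - 3 * x ^ 4 / 8 + 25 * x ^ 3 / 24 - 5 * x ^ 2 / 8 - 13 * x / 12 + 1

/-- piece of W₆,₀ on [2,3] -/
def w3 (x : ℝ) : ℝ :=
  -x ^ 5 / 120 + x ^ 4 / 8 - 17 * x ^ 3 / 24 + 15 * x ^ 2 / 8 - 137 * x / 60 + 1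

/-- the sixth-order accurate C⁰ B-spline kernel W₆,₀ -/
def W60 (x : ℝ) : ℝ :=
  if |x| ≤ 1 then w1 |x|
  else if |x| ≤ 2 then w2 |x|
  else if |x| ≤ 3 then w3 |x|
  else 0

lemma W60_neg (x : ℝ) : W60 (-x) = W60 x := by simp [W60, abs_neg]

lemma W60_zero {x : ℝ} (h : 3 ≤ |x|) : W60 x = 0 := by
  unfold W60
  rcases eq_or_lt_of_le h with h' | h'
  · rw [← h']
    norm_num [w1, w2, w3]
  · rw [if_neg (by linarith), if_neg (by linarith), if_neg (by linarith)]

lemma W60_eq_w1 {x : ℝ} (h0 : 0 ≤ x) (h1 : x ≤ 1) : W60 x = w1 x := by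
  rw [W60, abs_of_nonneg h0, if_pos h1]

lemma W60_eq_w2 {x : ℝ} (h1 : 1 ≤ x) (h2 : x ≤ 2) : W60 x = w2 x := by
  rw [W60, abs_of_nonneg (by linarith)]
  split_ifs with ha
  · have hx : x = 1 := le_antisymm ha h1
    subst hx; norm_num [w1, w2]
  · rfl

lemma W60_eq_w3 {x : ℝ} (h2 : 2 ≤ x) (h3 : x ≤ 3) : W60 x = w3 x := by
  rw [W60, abs_of_nonneg (by linarith)]
  rw [if_neg (by linarith)]
  split_ifs with ha
  · have hx : x = 2 := le_antisymm ha h2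
    subst hx; norm_num [w2, w3]
  · rfl

/-- a general tsum reduction to a finite sum over the fractional part -/
lemma tsum_W60 (g : ℝ → ℝ) (x : ℝ) :
    ∑' j : ℤ, g (x - j) * W60 (x - j)
      = ∑ k ∈ Finset.Icc (-3 : ℤ) 3,
          g (Int.fract x - k) * W60 (Int.fract x - k) := by
  have hfl : (⌊x⌋ : ℝ) ≤ x := Int.floor_le x
  have hfl' : x < ⌊x⌋ + 1 := Int.lt_floor_add_one x
  rw [tsum_eq_sum (s := Finset.Icc (⌊x⌋ + -3) (⌊x⌋ + 3)) ?_]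
  · rw [← Finset.map_add_left_Icc, Finset.sum_map]
    refine Finset.sum_congr rfl fun k _ => ?_
    have : x - ((addLeftEmbedding ⌊x⌋) k : ℤ) = Int.fract x - k := by
      simp only [addLeftEmbedding_apply, Int.fract]
      push_cast
      ring
    rw [this]
  · intro j hj
    simp only [Finset.mem_Icc, not_and_or, not_le] at hj
    have h3 : (3 : ℝ) ≤ |x - j| := by
      rcases hj with hj | hj
      · have hj' : (j : ℝ) + 4 ≤ (⌊x⌋ : ℝ) := by exact_mod_cast (by omega : j + 4 ≤ ⌊x⌋)
        rw [le_abs]; left; linarith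
      · have hj' : (⌊x⌋ : ℝ) + 4 ≤ (j : ℝ) := by exact_mod_cast (by omega : ⌊x⌋ + 4 ≤ j)
        rw [le_abs]; right; linarith
    rw [W60_zero h3, mul_zero]

lemma icc_expand : (Finset.Icc (-3 : ℤ) 3) = {-3, -2, -1, 0, 1, 2, 3} := by decide

/-- values at the seven shifted points for t ∈ [0,1) -/
lemma W60_shift (t : ℝ) (h0 : 0 ≤ t) (h1 : t < 1) :
    W60 (t + 3) = 0 ∧ W60 (t + 2) = w3 (t + 2) ∧ W60 (t + 1) = w2 (t + 1) ∧
    W60 t = w1 t ∧ W60 (t - 1) = w1 (1 - t) ∧ W60 (t - 2) = w2 (2 - t) ∧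
    W60 (t - 3) = w3 (3 - t) := by
  refine ⟨?_, ?_, ?_, ?_, ?_, ?_, ?_⟩
  · exact W60_zero (by rw [abs_of_nonneg (by linarith)]; linarith)
  · exact W60_eq_w3 (by linarith) (by linarith)
  · exact W60_eq_w2 (by linarith) (by linarith)
  · exact W60_eq_w1 h0 h1.le
  · rw [show t - 1 = -(1 - t) by ring, W60_neg]
    exact W60_eq_w1 (by linarith) (by linarith)
  · rw [show t - 2 = -(2 - t) by ring, W60_neg]
    exact W60_eq_w2 (by linarith) (by linarith)
  · rw [show t - 3 = -(3 - t) by ring, W60_neg]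
    exact W60_eq_w3 (by linarith) (by linarith)

/-- antiderivative of a generic quintic -/
lemma hasDerivAt_quintic (c0 c1 c2 c3 c4 c5 x : ℝ) :
    HasDerivAt (fun y : ℝ => c5 * y ^ 6 / 6 + c4 * y ^ 5 / 5 + c3 * y ^ 4 / 4 +
        c2 * y ^ 3 / 3 + c1 * y ^ 2 / 2 + c0 * y)
      (c5 * x ^ 5 + c4 * x ^ 4 + c3 * x ^ 3 + c2 * x ^ 2 + c1 * x + c0) x := by
  have h : HasDerivAt (fun y : ℝ => c5 * y ^ 6 / 6 + c4 * y ^ 5 / 5 + c3 * y ^ 4 / 4 +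
      c2 * y ^ 3 / 3 + c1 * y ^ 2 / 2 + c0 * y)
      ((6 : ℕ) * x ^ 5 * c5 / 6 + (5 : ℕ) * x ^ 4 * c4 / 5 + (4 : ℕ) * x ^ 3 * c3 / 4 +
        (3 : ℕ) * x ^ 2 * c2 / 3 + (2 : ℕ) * x ^ 1 * c1 / 2 + c0 * 1) x := by
    exact ((((((((hasDerivAt_pow 6 x).const_mul c5).div_const 6).add
      (((hasDerivAt_pow 5 x).const_mul c4).div_const 5)).add
      (((hasDerivAt_pow 4 x).const_mul c3).div_const 4)).add
      (((hasDerivAt_pow 3 x).const_mul c2).div_const 3)).add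
      (((hasDerivAt_pow 2 x).const_mul c1).div_const 2)).add
      ((hasDerivAt_id x).const_mul c0)).congr_deriv (by push_cast; ring)
  convert h using 1
  push_cast
  ring

lemma integral_quintic (c0 c1 c2 c3 c4 c5 a b : ℝ) :
    ∫ x in a..b, (c5 * x ^ 5 + c4 * x ^ 4 + c3 * x ^ 3 + c2 * x ^ 2 + c1 * x + c0) =
      (c5 * b ^ 6 / 6 + c4 * b ^ 5 / 5 + c3 * b ^ 4 / 4 + c2 * b ^ 3 / 3 + c1 * b ^ 2 / 2
        + c0 * b) -
      (c5 * a ^ 6 / 6 + c4 * a ^ 5 / 5 + c3 * a ^ 4 / 4 + c2 * a ^ 3 / 3 + c1 * a ^ 2 / 2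
        + c0 * a) := by
  refine intervalIntegral.integral_eq_sub_of_hasDerivAt
    (fun x _ => hasDerivAt_quintic c0 c1 c2 c3 c4 c5 x) ?_
  exact (Continuous.intervalIntegrable (by continuity) a b)

lemma contW : Continuous W60 := by
  have h : Continuous fun y : ℝ =>
      if y ≤ 1 then w1 y else if y ≤ 2 then w2 y else if y ≤ 3 then w3 y else 0 := by
    refine Continuous.if_le ?_ ?_ continuous_id continuous_const ?_
    · unfold w1; fun_prop
    · refine Continuous.if_le ?_ ?_ continuous_id continuous_const ?_
      · unfold w2; fun_prop
      · refine Continuous.if_le ?_ continuous_const continuous_id continuous_const ?_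
        · unfold w3; fun_prop
        · intro x hx; subst hx; norm_num [w3]
      · intro x hx; subst hx; norm_num [w2, w3]
    · intro x hx; subst hx; norm_num [w1, w2]
  have : W60 = fun x => if |x| ≤ 1 then w1 |x| else if |x| ≤ 2 then w2 |x|
      else if |x| ≤ 3 then w3 |x| else 0 := rfl
  rw [this]
  exact h.comp continuous_abs

/-- the discrete moment conditions for W₆,₀: the kernel
reproduces constants and annihilates the first and second discrete moments;
equivalently its zeroth continuous moment is 1 and its first moment vanishes. -/
theorem stmt_16 :
    (∀ x : ℝ, ∑' j : ℤ, W60 (x - j) = 1) ∧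
    (∀ x : ℝ, ∑' j : ℤ, (x - j) * W60 (x - j) = 0) ∧
    (∀ x : ℝ, ∑' j : ℤ, (x - j) ^ 2 * W60 (x - j) = 0) ∧
    (∫ x : ℝ, W60 x = 1) ∧
    (∫ x : ℝ, x * W60 x = 0) := by
  have main : ∀ g : ℝ → ℝ, ∀ x : ℝ,
      ∑' j : ℤ, g (x - j) * W60 (x - j) =
        g (Int.fract x + 3) * W60 (Int.fract x + 3) +
        g (Int.fract x + 2) * w3 (Int.fract x + 2) +
        g (Int.fract x + 1) * w2 (Int.fract x + 1) +
        g (Int.fract x) * w1 (Int.fract x) +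
        g (Int.fract x - 1) * w1 (1 - Int.fract x) +
        g (Int.fract x - 2) * w2 (2 - Int.fract x) +
        g (Int.fract x - 3) * w3 (3 - Int.fract x) := by
    intro g x
    rw [tsum_W60, icc_expand]
    obtain ⟨e3, e2, e1, e0, f1, f2, f3⟩ :=
      W60_shift (Int.fract x) (Int.fract_nonneg x) (Int.fract_lt_one x)
    rw [Finset.sum_insert (by decide), Finset.sum_insert (by decide),
      Finset.sum_insert (by decide), Finset.sum_insert (by decide),
      Finset.sum_insert (by decide), Finset.sum_insert (by decide),
      Finset.sum_singleton]
    push_cast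
    rw [show Int.fract x - -3 = Int.fract x + 3 by ring,
      show Int.fract x - -2 = Int.fract x + 2 by ring,
      show Int.fract x - -1 = Int.fract x + 1 by ring,
      show Int.fract x - 0 = Int.fract x by ring]
    rw [e3, e2, e1, e0, f1, f2, f3]
    ring
  have hInt : ∀ a b : ℝ, IntervalIntegrable W60 volume a b :=
    fun a b => contW.intervalIntegrable a b
  refine ⟨?_, ?_, ?_, ?_, ?_⟩
  · intro x
    have h := main (fun _ => (1 : ℝ)) x
    simp only [one_mul] at h
    rw [h]
    set t := Int.fract x
    have h0 := Int.fract_nonneg x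
    have h1 := Int.fract_lt_one x
    rw [W60_zero (x := t + 3) (by rw [abs_of_nonneg (by linarith)]; linarith)]
    simp only [w1, w2, w3]
    ring
  · intro x
    have h := main (fun y => y) x
    rw [h]
    set t := Int.fract x
    have h0 := Int.fract_nonneg x
    have h1 := Int.fract_lt_one x
    rw [W60_zero (x := t + 3) (by rw [abs_of_nonneg (by linarith)]; linarith)]
    simp only [w1, w2, w3]
    ring
  · intro x
    have h := main (fun y => y ^ 2) x
    rw [h]
    set t := Int.fract x
    have h0 := Int.fract_nonneg x
    have h1 := Int.fract_lt_one x
    rw [W60_zero (x := t + 3) (by rw [abs_of_nonneg (by linarith)]; linarith)]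
    simp only [w1, w2, w3]
    ring
  · -- the integral
    have hsupp : ∀ x ∉ Set.Ioc (-3 : ℝ) 3, W60 x = 0 := by
      intro x hx
      simp only [Set.mem_Ioc, not_and_or, not_lt, not_le] at hx
      refine W60_zero ?_
      rcases hx with hx | hx
      · rw [le_abs]; right; linarith
      · rw [le_abs]; left; linarith
    rw [← setIntegral_eq_integral_of_forall_compl_eq_zero hsupp,
      ← intervalIntegral.integral_of_le (by norm_num : (-3 : ℝ) ≤ 3)]
    have p1 : ∫ x in (-3 : ℝ)..(-2), W60 x = 11 / 1440 := by
      rw [intervalIntegral.integral_congr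
        (g := fun x => (1/120) * x ^ 5 + (1/8) * x ^ 4 + (17/24) * x ^ 3 + (15/8) * x ^ 2
          + (137/60) * x + 1) ?_, integral_quintic]
      · norm_num
      · intro x hx
        rw [Set.uIcc_of_le (by norm_num)] at hx
        obtain ⟨hxa, hxb⟩ := hx
        rw [← W60_neg, W60_eq_w3 (by linarith) (by linarith)]
        simp only [w3]; ring
    have p2 : ∫ x in (-2 : ℝ)..(-1), W60 x = -31 / 480 := by
      rw [intervalIntegral.integral_congr
        (g := fun x => (-1/24) * x ^ 5 + (-3/8) * x ^ 4 + (-25/24) * x ^ 3 + (-5/8) * x ^ 2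
          + (13/12) * x + 1) ?_, integral_quintic]
      · norm_num
      · intro x hx
        rw [Set.uIcc_of_le (by norm_num)] at hx
        obtain ⟨hxa, hxb⟩ := hx
        rw [← W60_neg, W60_eq_w2 (by linarith) (by linarith)]
        simp only [w2]; ring
    have p3 : ∫ x in (-1 : ℝ)..0, W60 x = 401 / 720 := by
      rw [intervalIntegral.integral_congr
        (g := fun x => (1/12) * x ^ 5 + (1/4) * x ^ 4 + (-5/12) * x ^ 3 + (-5/4) * x ^ 2
          + (1/3) * x + 1) ?_, integral_quintic]
      · norm_num
      · intro x hx
        rw [Set.uIcc_of_le (by norm_num)] at hx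
        obtain ⟨hxa, hxb⟩ := hx
        rw [← W60_neg, W60_eq_w1 (by linarith) (by linarith)]
        simp only [w1]; ring
    have p4 : ∫ x in (0 : ℝ)..1, W60 x = 401 / 720 := by
      rw [intervalIntegral.integral_congr
        (g := fun x => (-1/12) * x ^ 5 + (1/4) * x ^ 4 + (5/12) * x ^ 3 + (-5/4) * x ^ 2
          + (-1/3) * x + 1) ?_, integral_quintic]
      · norm_num
      · intro x hx
        rw [Set.uIcc_of_le (by norm_num)] at hx
        obtain ⟨hxa, hxb⟩ := hx
        rw [W60_eq_w1 (by linarith) (by linarith)]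
        simp only [w1]; ring
    have p5 : ∫ x in (1 : ℝ)..2, W60 x = -31 / 480 := by
      rw [intervalIntegral.integral_congr
        (g := fun x => (1/24) * x ^ 5 + (-3/8) * x ^ 4 + (25/24) * x ^ 3 + (-5/8) * x ^ 2
          + (-13/12) * x + 1) ?_, integral_quintic]
      · norm_num
      · intro x hx
        rw [Set.uIcc_of_le (by norm_num)] at hx
        obtain ⟨hxa, hxb⟩ := hx
        rw [W60_eq_w2 (by linarith) (by linarith)]
        simp only [w2]; ring
    have p6 : ∫ x in (2 : ℝ)..3, W60 x = 11 / 1440 := by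
      rw [intervalIntegral.integral_congr
        (g := fun x => (-1/120) * x ^ 5 + (1/8) * x ^ 4 + (-17/24) * x ^ 3 + (15/8) * x ^ 2
          + (-137/60) * x + 1) ?_, integral_quintic]
      · norm_num
      · intro x hx
        rw [Set.uIcc_of_le (by norm_num)] at hx
        obtain ⟨hxa, hxb⟩ := hx
        rw [W60_eq_w3 (by linarith) (by linarith)]
        simp only [w3]; ring
    have s1 := intervalIntegral.integral_add_adjacent_intervals
      (hInt (-3) (-2)) (hInt (-2) (-1))
    have s2 := intervalIntegral.integral_add_adjacent_intervals
      (hInt (-3) (-1)) (hInt (-1) 0)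
    have s3 := intervalIntegral.integral_add_adjacent_intervals
      (hInt (-3) 0) (hInt 0 1)
    have s4 := intervalIntegral.integral_add_adjacent_intervals
      (hInt (-3) 1) (hInt 1 2)
    have s5 := intervalIntegral.integral_add_adjacent_intervals
      (hInt (-3) 2) (hInt 2 3)
    rw [← s5, ← s4, ← s3, ← s2, ← s1, p1, p2, p3, p4, p5, p6]
    norm_num
  · -- odd function integrates to zero
    have key : ∫ x : ℝ, (-x) * W60 (-x) = ∫ x : ℝ, x * W60 x :=
      (Measure.measurePreserving_neg (volume : Measure ℝ)).integral_comp
        (Homeomorph.neg ℝ).measurableEmbedding (fun y => y * W60 y)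
    have h2 : ∫ x : ℝ, (-x) * W60 (-x) = - ∫ x : ℝ, x * W60 x := by
      rw [show (fun x : ℝ => (-x) * W60 (-x)) = fun x : ℝ => -(x * W60 x) by
        funext x; rw [W60_neg]; ring, integral_neg]
    linarith [key, h2, le_refl (∫ x : ℝ, x * W60 x)]
end
end
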